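/- Let f : ℝⁿ → ℝ be convex, differentiable, and L-smooth with L > 0. Then the gradient of f is co-coercive with constant 1/L: ⟨∇f(x) − ∇f(y), x − y⟩ ≥ (1/L)‖∇f(x) − ∇f(y)‖² for all x, y ∈ ℝⁿ. -/

import Mathlib

/-!
Convexity gives the supporting-hyperplane bound `f x + ⟪∇f x, z - x⟫ ≤ f z`. Evaluating it at the
gradient step `z = y - L⁻¹ (∇f y - ∇f x)` and bounding `f z` from above by smoothness at `y`
sharpens it to `f x + ⟪∇f x, y - x⟫ + ‖∇f y - ∇f x‖² / (2L) ≤ f y`. Adding this to the same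
inequality with `x` and `y` exchanged cancels the function values and leaves co-coercivity.
-/

open scoped RealInnerProductSpace

theorem ConvexOn.add_fderiv_sub_le {E : Type*} [NormedAddCommGroup E] [NormedSpace ℝ E]
    {s : Set E} {f : E → ℝ} {f' : E →L[ℝ] ℝ} {x z : E} (hf : ConvexOn ℝ s f) (hx : x ∈ s)
    (hz : z ∈ s) (hd : HasFDerivAt f f' x) :
    f x + f' (z - x) ≤ f z := by
  let c : ℝ →ᵃ[ℝ] E := AffineMap.lineMap x z
  have hc0 : c 0 = x := AffineMap.lineMap_apply_zero x z
  have hc1 : c 1 = z := AffineMap.lineMap_apply_one x z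
  have hcd : HasDerivAt c (z - x) 0 := AffineMap.hasDerivAt_lineMap
  have hgd : HasDerivAt (f ∘ c) (f' (z - x)) 0 := (hc0 ▸ hd).comp_hasDerivAt 0 hcd
  have hslope := (hf.comp_affineMap c).le_slope_of_hasDerivAt
    (by simpa [hc0] using hx) (by simpa [hc1] using hz) one_pos hgd
  simp only [slope_def_field, Function.comp_apply, hc0, hc1, sub_zero, div_one] at hslope
  linarith

theorem ConvexOn.add_inner_sub_le_of_hasGradientAt {E : Type*} [NormedAddCommGroup E]
    [InnerProductSpace ℝ E] [CompleteSpace E] {s : Set E} {f : E → ℝ} {g x z : E}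
    (hf : ConvexOn ℝ s f) (hx : x ∈ s) (hz : z ∈ s) (hd : HasGradientAt f g x) :
    f x + ⟪g, z - x⟫ ≤ f z := by
  simpa using hf.add_fderiv_sub_le hx hz hd.hasFDerivAt

theorem add_inner_sub_add_norm_sub_sq_le_of_supporting_of_smooth {E : Type*}
    [NormedAddCommGroup E] [InnerProductSpace ℝ E] {f : E → ℝ} {gx gy x y : E} {L : ℝ}
    (hsupp : ∀ z, f x + ⟪gx, z - x⟫ ≤ f z)
    (hsm : ∀ z, f z ≤ f y + ⟪gy, z - y⟫ + L / 2 * ‖z - y‖ ^ 2) :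
    f x + ⟪gx, y - x⟫ + 1 / (2 * L) * ‖gy - gx‖ ^ 2 ≤ f y := by
  set g := gy - gx
  set z := y - L⁻¹ • g
  have hlow : f x + ⟪gx, y - x⟫ - L⁻¹ * ⟪gx, g⟫ ≤ f z := by
    have hzx : z - x = (y - x) - L⁻¹ • g := sub_right_comm y _ x
    simpa only [hzx, inner_sub_right, real_inner_smul_right, add_sub_assoc] using hsupp z
  have hup : f z ≤ f y - L⁻¹ * ⟪gy, g⟫ + L / 2 * (L⁻¹ ^ 2 * ‖g‖ ^ 2) := by
    have hzy : z - y = -(L⁻¹ • g) := sub_sub_cancel_left y _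
    simpa only [hzy, inner_neg_right, real_inner_smul_right, norm_neg, norm_smul, mul_pow,
      Real.norm_eq_abs, sq_abs, ← sub_eq_add_neg] using hsm z
  have hgg : ⟪gy, g⟫ - ⟪gx, g⟫ = ‖g‖ ^ 2 := by
    rw [← inner_sub_left, real_inner_self_eq_norm_sq]
  -- also true at `L = 0`, since `0⁻¹ = 0`
  have hcoef : L * L⁻¹ ^ 2 = L⁻¹ := by grind
  have hhalf : 1 / (2 * L) = L⁻¹ / 2 := by ring
  rw [hhalf]
  linear_combination hlow + hup - L⁻¹ * hgg + ‖g‖ ^ 2 / 2 * hcoef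

theorem smooth_convex_gradient_cocoercive_general
    (n : ℕ) (f : EuclideanSpace ℝ (Fin n) → ℝ)
    (f' : EuclideanSpace ℝ (Fin n) → EuclideanSpace ℝ (Fin n))
    (hgrad : ∀ x, HasGradientAt f (f' x) x)
    (hconv : ConvexOn ℝ Set.univ f)
    (L : ℝ)
    (hsm : ∀ x y : EuclideanSpace ℝ (Fin n),
      f x ≤ f y + ⟪f' y, x - y⟫ + L / 2 * ‖x - y‖ ^ 2) :
    ∀ x y : EuclideanSpace ℝ (Fin n),
      ⟪f' x - f' y, x - y⟫ ≥ 1 / L * ‖f' x - f' y‖ ^ 2 := by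
  have hsharp : ∀ x y, f x + ⟪f' x, y - x⟫ + 1 / (2 * L) * ‖f' y - f' x‖ ^ 2 ≤ f y :=
    fun x y ↦ add_inner_sub_add_norm_sub_sq_le_of_supporting_of_smooth
      (fun z ↦ hconv.add_inner_sub_le_of_hasGradientAt trivial trivial (hgrad x)) (hsm · y)
  intro x y
  have hxy := hsharp x y
  have hyx := hsharp y x
  rw [norm_sub_rev, ← neg_sub x y, inner_neg_right] at hxy
  have hhalf : 1 / L = 2 * (1 / (2 * L)) := by ring
  rw [inner_sub_left]
  linear_combination hxy + hyx + ‖f' x - f' y‖ ^ 2 * hhalf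

/-- The gradient of a convex, differentiable, L-smooth function is
co-coercive with constant 1/L. -/
theorem smooth_convex_gradient_cocoercive
    (n : ℕ) (f : EuclideanSpace ℝ (Fin n) → ℝ)
    (f' : EuclideanSpace ℝ (Fin n) → EuclideanSpace ℝ (Fin n))
    (hgrad : ∀ x, HasGradientAt f (f' x) x)
    (hconv : ConvexOn ℝ Set.univ f)
    (L : ℝ) (hL : 0 < L)
    (hsm : ∀ x y : EuclideanSpace ℝ (Fin n),
      f x ≤ f y + ⟪f' y, x - y⟫ + L / 2 * ‖x - y‖ ^ 2) :
    ∀ x y : EuclideanSpace ℝ (Fin n),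
      ⟪f' x - f' y, x - y⟫ ≥ 1 / L * ‖f' x - f' y‖ ^ 2 :=
  smooth_convex_gradient_cocoercive_general n f f' hgrad hconv L hsm
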